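/- arXiv:1704.00766 — 4 statements merged into one kernel-verified Lean document; each statement's English description precedes it below -/
import Mathlib

section
/- Let $D_g > 0$, $D_j > 0$ for $j \neq m$, $\bar F = 1/\sum_{j\neq m} 1/D_j$, and $\tilde K = (\min_{j\neq m} D_j)/\bar F$. For real $K \ge 1$, define $F(\kappa) = \min\{\kappa \bar F, \min_{j\neq m} D_j\}$ and $h(u) = u D_g + F(K-u)$ for $u \in [0,1]$. Then $\max_{u\in[0,1]} h(u) = \max\{h(0), h(1)\}$ if and only if at least one of the following holds: (a) $D_g \ge \bar F$; (b) $K \le \tilde K$; (c) $K \ge \tilde K + 1$. -/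
open Finset

theorem stmt_3 {ι : Type*} (J : Finset ι) (hJ : J.Nonempty)
    (D : ι → ℝ) (hD : ∀ j ∈ J, 0 < D j) (Dg : ℝ) (hDg : 0 < Dg)
    (barF : ℝ) (hbarF : barF = (∑ j ∈ J, 1 / D j)⁻¹)
    (tildeK : ℝ) (htildeK : tildeK = J.inf' hJ D / barF)
    (F : ℝ → ℝ) (hF : ∀ κ, 0 ≤ κ → F κ = min (κ * barF) (J.inf' hJ D))
    (K : ℝ) (hK : 1 ≤ K) :
    (∀ u ∈ Set.Icc (0:ℝ) 1,
        u * Dg + F (K - u) ≤ max (0 * Dg + F (K - 0)) (1 * Dg + F (K - 1)))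
      ↔ (barF ≤ Dg ∨ K ≤ tildeK ∨ tildeK + 1 ≤ K) := by
  obtain ⟨j0, hj0, hj0eq⟩ := J.exists_mem_eq_inf' hJ D
  set Dmin := J.inf' hJ D with hDminDef
  have hsum : 0 < ∑ j ∈ J, 1 / D j :=
    Finset.sum_pos (fun j hj => by have := hD j hj; positivity) hJ
  have hbarF0 : 0 < barF := by rw [hbarF]; exact inv_pos.mpr hsum
  have hDmin0 : 0 < Dmin := by rw [hj0eq]; exact hD j0 hj0
  have hle : barF ≤ Dmin := by
    have h1 : 1 / D j0 ≤ ∑ j ∈ J, 1 / D j :=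
      Finset.single_le_sum (f := fun j => 1 / D j) (fun j hj => by have := hD j hj; positivity) hj0
    have h2 : (∑ j ∈ J, 1 / D j)⁻¹ ≤ (1 / D j0)⁻¹ := by
      apply inv_anti₀ _ h1
      have := hD j0 hj0; positivity
    rw [hbarF, hj0eq]
    simpa using h2
  have hDminEq : Dmin = tildeK * barF := by
    rw [htildeK]; field_simp
  have htK1 : 1 ≤ tildeK := by
    rw [htildeK]; rw [le_div_iff₀ hbarF0]; linarith
  have hF0 : F (K - 0) = min (K * barF) Dmin := by
    rw [sub_zero]; exact hF K (by linarith)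
  have hF1 : F (K - 1) = min ((K - 1) * barF) Dmin := hF (K - 1) (by linarith)
  constructor
  · intro hall
    by_contra hc
    push_neg at hc
    obtain ⟨ha, hb, hcc⟩ := hc
    have hmem : K - tildeK ∈ Set.Icc (0:ℝ) 1 := ⟨by linarith, by linarith⟩
    have hx := hall (K - tildeK) hmem
    have hFx : F (K - (K - tildeK)) = Dmin := by
      have : K - (K - tildeK) = tildeK := by ring
      rw [this, hF tildeK (by linarith)]
      rw [min_eq_right]
      rw [hDminEq]
    have hF0' : F (K - 0) = Dmin := by
      rw [hF0, min_eq_right]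
      nlinarith
    have hF1' : F (K - 1) = (K - 1) * barF := by
      rw [hF1, min_eq_left]
      nlinarith
    rw [hFx, hF0', hF1'] at hx
    rcases le_max_iff.mp hx with h | h
    · nlinarith
    · nlinarith [mul_pos (sub_pos.mpr ha) (by linarith : (0:ℝ) < tildeK + 1 - K)]
  · rintro (ha | hb | hc) u ⟨hu0, hu1⟩ <;>
      have hFu : F (K - u) = min ((K - u) * barF) Dmin := hF (K - u) (by linarith)
    · -- barF ≤ Dg
      apply le_trans _ (le_max_right _ _)
      rw [hFu, hF1]
      have h1 : min ((K - u) * barF) Dmin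
          ≤ min ((K - 1) * barF) Dmin + (1 - u) * barF := by
        rw [← min_add_add_right]
        apply min_le_min
        · apply le_of_eq; ring
        · nlinarith
      nlinarith [mul_le_mul_of_nonneg_left ha (by linarith : (0:ℝ) ≤ 1 - u)]
    · -- K ≤ tildeK
      have hub : (K - u) * barF ≤ Dmin := by nlinarith
      have hu' : min ((K - u) * barF) Dmin = (K - u) * barF := min_eq_left hub
      have h0' : F (K - 0) = min (K * barF) Dmin := hF0
      rw [hFu, hu', hF0, hF1]
      have h0m : min (K * barF) Dmin = K * barF := min_eq_left (by nlinarith)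
      have h1m : min ((K - 1) * barF) Dmin = (K - 1) * barF :=
        min_eq_left (by nlinarith)
      rw [h0m, h1m]
      rcases le_total Dg barF with h | h
      · apply le_trans _ (le_max_left _ _); nlinarith
      · apply le_trans _ (le_max_right _ _); nlinarith
    · -- tildeK + 1 ≤ K
      apply le_trans _ (le_max_right _ _)
      rw [hFu, hF1]
      have k1 := mul_le_mul_of_nonneg_right (show tildeK ≤ K - u by linarith) hbarF0.le
      have k2 := mul_le_mul_of_nonneg_right (show tildeK ≤ K - 1 by linarith) hbarF0.le
      have hu' : min ((K - u) * barF) Dmin = Dmin := min_eq_right (by linarith [hDminEq])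
      have h1' : min ((K - 1) * barF) Dmin = Dmin := min_eq_right (by linarith [hDminEq])
      rw [hu', h1']
      linarith [mul_le_mul_of_nonneg_right hu1 hDg.le]
end

section
/- Consider $M-1$ 'cars' indexed by $j$, where car $j$ moves left from position $0$ at constant speed $D_j > 0$ whenever driven, and exactly one car (the one currently closest to the origin, i.e., with the largest position) is driven during each unit time interval. Then the position of the rightmost car at time $n$, divided by $n$, converges to $-\bar F$ as $n \to \infty$, where $\bar F = 1/\sum_j 1/D_j$. -/
/-!
Weighting car `j` by `1 / D j`, each unit of driving lowers `∑ j, p n j / D j` by exactly one, so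
this weighted sum equals `-n`. Since the driven car is always the rightmost one, no car ever falls
more than `max D` behind the rightmost position `M n`, so every `p n j` lies in
`[M n - max D, M n]`. Hence `M n * ∑ j, 1 / D j = -n + O(1)`.
-/

open Finset Filter

theorem tendsto_div_natCast_of_le_of_le {u : ℕ → ℝ} {c C : ℝ}
    (hlow : ∀ n : ℕ, c * n ≤ u n) (hhigh : ∀ n : ℕ, u n ≤ c * n + C) :
    Tendsto (fun n : ℕ => u n / n) atTop (nhds c) := by
  have hupper : Tendsto (fun n : ℕ => c + C / n) atTop (nhds c) := by
    simpa using tendsto_const_nhds.add (tendsto_const_div_atTop_nhds_zero_nat C)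
  refine tendsto_of_tendsto_of_tendsto_of_le_of_le' tendsto_const_nhds hupper ?_ ?_ <;>
    filter_upwards [eventually_gt_atTop 0] with n hn <;>
    have hn' : (0 : ℝ) < n := Nat.cast_pos.mpr hn
  · rw [le_div_iff₀ hn']
    exact hlow n
  · rw [div_le_iff₀ hn', add_mul, div_mul_cancel₀ _ hn'.ne']
    exact hhigh n

section WeightedSum

variable {ι : Type*} [Fintype ι] {D x : ι → ℝ}

theorem mul_sum_one_div_le_sum_div (hD : ∀ j, 0 ≤ D j) {a : ℝ} (h : ∀ j, a ≤ x j) :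
    a * ∑ j, 1 / D j ≤ ∑ j, x j / D j := by
  rw [mul_sum]
  gcongr with j
  rw [mul_one_div]
  exact div_le_div_of_nonneg_right (h j) (hD j)

theorem sum_div_le_mul_sum_one_div (hD : ∀ j, 0 ≤ D j) {b : ℝ} (h : ∀ j, x j ≤ b) :
    ∑ j, x j / D j ≤ b * ∑ j, 1 / D j := by
  rw [mul_sum]
  gcongr with j
  rw [mul_one_div]
  exact div_le_div_of_nonneg_right (h j) (hD j)

end WeightedSum

namespace Driving

variable {ι : Type*} [DecidableEq ι] {D : ι → ℝ} {p : ℕ → ι → ℝ} {d : ℕ → ι}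

theorem apply_succ_le (hD : ∀ j, 0 ≤ D j)
    (hstep : ∀ n j, p (n + 1) j = if j = d n then p n j - D j else p n j) (n : ℕ) (j : ι) :
    p (n + 1) j ≤ p n j := by
  rw [hstep]
  split_ifs
  · linarith [hD j]
  · exact le_rfl

variable [Fintype ι]

theorem sum_div_succ (hD : ∀ j, D j ≠ 0)
    (hstep : ∀ n j, p (n + 1) j = if j = d n then p n j - D j else p n j) (n : ℕ) :
    ∑ j, p (n + 1) j / D j = ∑ j, p n j / D j - 1 := by
  have hterm : ∀ j, p (n + 1) j / D j = p n j / D j - if j = d n then 1 else 0 := by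
    intro j
    rw [hstep]
    split_ifs with hj
    · rw [sub_div, div_self (hD j)]
    · rw [sub_zero]
  simp only [hterm, sum_sub_distrib, sum_ite_eq', mem_univ, if_true]

theorem sum_div_eq_neg (hD : ∀ j, D j ≠ 0) (h0 : ∀ j, p 0 j = 0)
    (hstep : ∀ n j, p (n + 1) j = if j = d n then p n j - D j else p n j) (n : ℕ) :
    ∑ j, p n j / D j = -n := by
  induction n with
  | zero => simp [h0]
  | succ n ih =>
    rw [sum_div_succ hD hstep, ih]
    push_cast
    ring

variable [Nonempty ι]

theorem sup'_succ_le (hD : ∀ j, 0 ≤ D j)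
    (hstep : ∀ n j, p (n + 1) j = if j = d n then p n j - D j else p n j) (n : ℕ) :
    univ.sup' univ_nonempty (p (n + 1)) ≤ univ.sup' univ_nonempty (p n) :=
  sup'_le _ _ fun j _ => (apply_succ_le hD hstep n j).trans (le_sup' _ (mem_univ j))

theorem sup'_sub_le {C : ℝ} (hD : ∀ j, 0 ≤ D j) (hDC : ∀ j, D j ≤ C)
    (h0 : ∀ j, p 0 j = 0) (hmax : ∀ n j, p n j ≤ p n (d n))
    (hstep : ∀ n j, p (n + 1) j = if j = d n then p n j - D j else p n j) (n : ℕ) (j : ι) :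
    univ.sup' univ_nonempty (p n) - C ≤ p n j := by
  induction n generalizing j with
  | zero =>
    have hC : 0 ≤ C := (hD (Classical.arbitrary ι)).trans (hDC _)
    have hp0 : p 0 = fun _ => 0 := funext h0
    simp only [hp0, sup'_const]
    linarith
  | succ n ih =>
    have hmono := sup'_succ_le hD hstep n
    rw [hstep]
    split_ifs with hj
    · subst hj
      have hdriven : p n (d n) = univ.sup' univ_nonempty (p n) :=
        (le_sup' _ (mem_univ _)).antisymm (sup'_le _ _ fun k _ => hmax n k)
      linarith [hDC (d n)]
    · linarith [ih j]

end Driving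

open Driving in
theorem stmt_8 {ι : Type*} [Fintype ι] [DecidableEq ι] [Nonempty ι]
    (D : ι → ℝ) (hD : ∀ j, 0 < D j)
    (p : ℕ → ι → ℝ) (d : ℕ → ι)
    (h0 : ∀ j, p 0 j = 0)
    (hmax : ∀ n j, p n j ≤ p n (d n))
    (hstep : ∀ n j, p (n + 1) j = if j = d n then p n j - D j else p n j) :
    Tendsto (fun n : ℕ => (Finset.univ.sup' Finset.univ_nonempty fun j => p n j) / n)
      atTop (nhds (-(∑ j, 1 / D j)⁻¹)) := by
  set S := ∑ j, 1 / D j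
  set C := univ.sup' univ_nonempty D
  have hS : 0 < S := sum_pos (fun j _ => one_div_pos.mpr (hD j)) univ_nonempty
  have hD0 : ∀ j, 0 ≤ D j := fun j => (hD j).le
  have hsum := sum_div_eq_neg (fun j => (hD j).ne') h0 hstep
  have hband := sup'_sub_le (C := C) hD0 (fun j => le_sup' D (mem_univ j)) h0 hmax hstep
  refine tendsto_div_natCast_of_le_of_le (C := C) (fun n => ?_) (fun n => ?_)
  · have h := sum_div_le_mul_sum_one_div (b := univ.sup' univ_nonempty (p n)) hD0
      fun j => le_sup' (p n) (mem_univ j)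
    rw [hsum n] at h
    rw [neg_mul, ← div_eq_inv_mul, ← neg_div, div_le_iff₀ hS]
    linarith
  · have h := mul_sum_one_div_le_sum_div hD0 (hband n)
    rw [hsum n] at h
    rw [← sub_le_iff_le_add, neg_mul, ← div_eq_inv_mul, ← neg_div, le_div_iff₀ hS]
    linarith
end

section
/- Fix real numbers $D_g > 0$, $D_j > 0$ ($j \neq m$), $\bar F = 1/\sum_{j\neq m} 1/D_j$, and $F(\kappa) = \min\{\kappa\bar F, \min_{j\neq m} D_j\}$ for real $\kappa \ge 0$. Define $I_m^{DGFi} = \max\{D_g + F(K-1),\ F(K)\}$ and $I_m^* = \max_{u\in[0,1]}\, [\,u D_g + F(K-u)\,]$ for an integer $K \ge 1$. Then $I_m^{DGFi} \le I_m^*$, with equality if and only if $D_g \ge \bar F$, or $K \le \tilde K$, or $K \ge \tilde K + 1$, where $\tilde K = (\min_{j\neq m} D_j)/\bar F$. -/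
/-!
Put `f κ = min (κ b) M` with `b = F̄` and `M = min_j D_j`, so that the relaxed rate is the
maximum of `g u = u D_g + f (K - u)` over `[0, 1]` and the DGFi rate is `max (g 1) (g 0)`.
The function `g` is piecewise linear with one kink at `u₀ = K - M / b = K - K̃`: slope `D_g`
before it and slope `D_g - b` after it. If `D_g ≥ b` it is nondecreasing, and if `u₀ ∉ (0, 1)`
it is affine on `[0, 1]`; in both cases its maximum is attained at an endpoint. Otherwise it
rises and then strictly falls, so `g u₀` beats both endpoints.
-/

open Set

def relaxedRate (b M Dg K u : ℝ) : ℝ := u * Dg + min ((K - u) * b) M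

section relaxedRate

variable {b M Dg K : ℝ}

theorem continuous_relaxedRate : Continuous (relaxedRate b M Dg K) := by
  unfold relaxedRate
  fun_prop

theorem bddAbove_relaxedRate_image : BddAbove (relaxedRate b M Dg K '' Icc 0 1) :=
  (isCompact_Icc.image continuous_relaxedRate).bddAbove

theorem max_relaxedRate_le_sSup :
    max (relaxedRate b M Dg K 1) (relaxedRate b M Dg K 0) ≤
      sSup (relaxedRate b M Dg K '' Icc 0 1) :=
  max_le (le_csSup bddAbove_relaxedRate_image (mem_image_of_mem _ (by simp)))
    (le_csSup bddAbove_relaxedRate_image (mem_image_of_mem _ (by simp)))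

theorem relaxedRate_le_one_of_le (hb : 0 ≤ b) (hbDg : b ≤ Dg) {u : ℝ} (hu : u ∈ Icc 0 1) :
    relaxedRate b M Dg K u ≤ relaxedRate b M Dg K 1 := by
  have hLipschitz : min ((K - u) * b) M ≤ min ((K - 1) * b) M + (1 - u) * b := by
    rcases le_total ((K - 1) * b) M with h | h
    · rw [min_eq_left h]
      exact (min_le_left _ _).trans_eq (by ring)
    · rw [min_eq_right h]
      nlinarith [min_le_right ((K - u) * b) M, hu.2]
  unfold relaxedRate
  nlinarith [hu.2]

theorem relaxedRate_le_max_of_mul_le (hb : 0 ≤ b) (hKM : K * b ≤ M) {u : ℝ}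
    (hu : u ∈ Icc 0 1) :
    relaxedRate b M Dg K u ≤ max (relaxedRate b M Dg K 1) (relaxedRate b M Dg K 0) := by
  have hAffine : ∀ v ∈ Icc (0 : ℝ) 1, relaxedRate b M Dg K v = v * (Dg - b) + K * b :=
    fun v hv => by
      rw [relaxedRate, min_eq_left (by nlinarith [hv.1])]
      ring
  rw [hAffine u hu, hAffine 1 (by simp), hAffine 0 (by simp)]
  rcases le_total Dg b with h | h
  · exact le_max_of_le_right (by nlinarith [hu.1])
  · exact le_max_of_le_left (by nlinarith [hu.2])

theorem relaxedRate_le_one_of_add_le (hb : 0 ≤ b) (hDg : 0 ≤ Dg) (hKM : M + b ≤ K * b)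
    {u : ℝ} (hu : u ∈ Icc 0 1) :
    relaxedRate b M Dg K u ≤ relaxedRate b M Dg K 1 := by
  unfold relaxedRate
  rw [min_eq_right (by nlinarith [hu.2]), min_eq_right (by linarith)]
  nlinarith [hu.2]

theorem relaxedRate_le_max (hb : 0 ≤ b) (hDg : 0 ≤ Dg)
    (h : b ≤ Dg ∨ K * b ≤ M ∨ M + b ≤ K * b) {u : ℝ} (hu : u ∈ Icc 0 1) :
    relaxedRate b M Dg K u ≤ max (relaxedRate b M Dg K 1) (relaxedRate b M Dg K 0) := by
  rcases h with h | h | h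
  · exact le_max_of_le_left (relaxedRate_le_one_of_le hb h hu)
  · exact relaxedRate_le_max_of_mul_le hb h hu
  · exact le_max_of_le_left (relaxedRate_le_one_of_add_le hb hDg h hu)

theorem exists_max_relaxedRate_lt (hb : 0 < b) (hDg : 0 < Dg) (hbDg : Dg < b)
    (hMK : M < K * b) (hKM : K * b < M + b) :
    ∃ u ∈ Icc (0 : ℝ) 1,
      max (relaxedRate b M Dg K 1) (relaxedRate b M Dg K 0) < relaxedRate b M Dg K u := by
  have hMb : M / b * b = M := div_mul_cancel₀ M hb.ne'
  have hkink_pos : 0 < K - M / b := by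
    rw [sub_pos, div_lt_iff₀ hb]
    exact hMK
  have hkink_lt_one : K - M / b < 1 := by
    rw [sub_lt_comm, lt_div_iff₀ hb]
    linarith
  have hleft : (K - 1) * b ≤ M := by linarith
  refine ⟨K - M / b, ⟨hkink_pos.le, hkink_lt_one.le⟩, ?_⟩
  unfold relaxedRate
  rw [sub_sub_cancel, sub_zero, hMb, min_self, min_eq_left hleft, min_eq_right hMK.le]
  refine max_lt ?_ (by linarith [mul_pos hkink_pos hDg])
  nlinarith [mul_pos (sub_pos.2 hkink_lt_one) (sub_pos.2 hbDg)]

theorem sSup_relaxedRate_eq_max_iff (hb : 0 < b) (hDg : 0 < Dg) :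
    max (relaxedRate b M Dg K 1) (relaxedRate b M Dg K 0) =
        sSup (relaxedRate b M Dg K '' Icc 0 1) ↔
      b ≤ Dg ∨ K * b ≤ M ∨ M + b ≤ K * b := by
  constructor
  · intro heq
    by_contra! ⟨hbDg, hMK, hKM⟩
    obtain ⟨u, hu, hlt⟩ := exists_max_relaxedRate_lt hb hDg hbDg hMK hKM
    exact hlt.not_ge (heq ▸ le_csSup bddAbove_relaxedRate_image (mem_image_of_mem _ hu))
  · intro h
    refine le_antisymm max_relaxedRate_le_sSup
      (csSup_le ((nonempty_Icc.2 zero_le_one).image _) ?_)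
    rintro _ ⟨u, hu, rfl⟩
    exact relaxedRate_le_max hb.le hDg.le h hu

end relaxedRate

theorem stmt_15 {ι : Type*} (J : Finset ι) (hJ : J.Nonempty)
    (D : ι → ℝ) (hD : ∀ j ∈ J, 0 < D j) (Dg : ℝ) (hDg : 0 < Dg)
    (barF : ℝ) (hbarF : barF = (∑ j ∈ J, 1 / D j)⁻¹)
    (tildeK : ℝ) (htildeK : tildeK = J.inf' hJ D / barF)
    (F : ℝ → ℝ) (hF : ∀ κ, 0 ≤ κ → F κ = min (κ * barF) (J.inf' hJ D))
    (K : ℕ) (hK : 1 ≤ K)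
    (IDGFi Istar : ℝ)
    (hI : IDGFi = max (Dg + F ((K : ℝ) - 1)) (F K))
    (hIs : Istar = sSup ((fun u => u * Dg + F ((K : ℝ) - u)) '' Set.Icc (0:ℝ) 1)) :
    IDGFi ≤ Istar ∧
      (IDGFi = Istar ↔ (barF ≤ Dg ∨ (K : ℝ) ≤ tildeK ∨ tildeK + 1 ≤ (K : ℝ))) := by
  set M := J.inf' hJ D
  have hbarF_pos : 0 < barF :=
    hbarF ▸ inv_pos.2 (Finset.sum_pos (fun j hj => one_div_pos.2 (hD j hj)) hJ)
  have hrate : ∀ u ∈ Icc (0 : ℝ) 1,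
      u * Dg + F ((K : ℝ) - u) = relaxedRate barF M Dg K u := fun u hu => by
    have hK' : (1 : ℝ) ≤ K := by exact_mod_cast hK
    rw [hF _ (by linarith [hu.2]), relaxedRate]
  have hIDGFi : IDGFi = max (relaxedRate barF M Dg K 1) (relaxedRate barF M Dg K 0) := by
    rw [hI, ← hrate 1 (by simp), ← hrate 0 (by simp), one_mul, zero_mul, zero_add, sub_zero]
  have hIstar : Istar = sSup (relaxedRate barF M Dg K '' Icc 0 1) :=
    hIs.trans (congrArg sSup (image_congr hrate))
  have hlow : (K : ℝ) ≤ tildeK ↔ K * barF ≤ M := by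
    rw [htildeK, le_div_iff₀ hbarF_pos]
  have hhigh : tildeK + 1 ≤ (K : ℝ) ↔ M + barF ≤ K * barF := by
    rw [htildeK, ← le_sub_iff_add_le, div_le_iff₀ hbarF_pos, sub_mul, one_mul,
      le_sub_iff_add_le]
  rw [hIDGFi, hIstar, hlow, hhigh, sSup_relaxedRate_eq_max_iff hbarF_pos hDg]
  exact ⟨max_relaxedRate_le_sSup, Iff.rfl⟩
end

section
/- Let $D_g > 0$, $D_j > 0$ for $j \in J$ with $|J| = M - 1 \ge 1$, $\bar F = (\sum_{j \in J} 1/D_j)^{-1}$, $\tilde K = (\min_{j\in J} D_j)/\bar F$, $F(\kappa) = \min\{\kappa \bar F, \min_{j\in J} D_j\}$, and $h(u) = u D_g + F(K-u)$ on $u \in [0,1]$ with real $K \ge 1$. If $D_g < \bar F$ and $\tilde K < K < \tilde K + 1$, then $h$ attains its maximum uniquely at the interior point $u^* = K - \tilde K \in (0,1)$, and $h(u^*) > \max\{h(0), h(1)\}$. -/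
/-!
With `m = min_j D_j`, on `[0,1]` we have `h u = u * D_g + min ((K - u) * F̄) m`: a concave
piecewise-linear function with slope `D_g > 0` left of the kink `u* = K - m / F̄ = K - K̃`
and slope `D_g - F̄ < 0` right of it. So the kink is the strict maximiser, and the hypothesis
`K̃ < K < K̃ + 1` puts it strictly between `0` and `1`, so that it differs from both endpoints.
-/

open Finset

theorem mul_add_min_lt_of_ne_kink {a b m K u : ℝ} (ha : 0 < a) (hab : a < b)
    (hu : u ≠ K - m / b) :
    u * a + min ((K - u) * b) m < (K - m / b) * a + m := by
  have hb : 0 < b := ha.trans hab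
  rcases hu.lt_or_gt with hlt | hgt
  · have hcap : m ≤ (K - u) * b := by
      rw [← div_le_iff₀ hb]; linarith
    rw [min_eq_right hcap]
    nlinarith
  · have hlin : (K - u) * b ≤ m := by
      rw [← le_div_iff₀ hb]; linarith
    rw [min_eq_left hlin]
    have hm_at_kink : m = (K - (K - m / b)) * b := by field_simp; ring
    nlinarith [mul_pos (sub_pos.2 hgt) (sub_pos.2 hab)]

theorem stmt_19 {ι : Type*} (J : Finset ι) (hJ : J.Nonempty)
    (D : ι → ℝ) (hD : ∀ j ∈ J, 0 < D j) (Dg : ℝ) (hDg : 0 < Dg)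
    (barF : ℝ) (hbarF : barF = (∑ j ∈ J, 1 / D j)⁻¹)
    (tildeK : ℝ) (htildeK : tildeK = J.inf' hJ D / barF)
    (F : ℝ → ℝ) (hF : ∀ κ, 0 ≤ κ → F κ = min (κ * barF) (J.inf' hJ D))
    (K : ℝ) (hK : 1 ≤ K)
    (hlt : Dg < barF) (h1 : tildeK < K) (h2 : K < tildeK + 1) :
    K - tildeK ∈ Set.Ioo (0:ℝ) 1 ∧
      (∀ u ∈ Set.Icc (0:ℝ) 1, u ≠ K - tildeK →
        u * Dg + F (K - u) < (K - tildeK) * Dg + F (K - (K - tildeK))) ∧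
      max (0 * Dg + F (K - 0)) (1 * Dg + F (K - 1)) <
        (K - tildeK) * Dg + F (K - (K - tildeK)) := by
  have hm : 0 < J.inf' hJ D := (lt_inf'_iff hJ).2 hD
  have hbarF0 : 0 < barF :=
    hbarF ▸ inv_pos.2 (sum_pos (fun j hj => one_div_pos.2 (hD j hj)) hJ)
  have htildeK0 : 0 < tildeK := htildeK ▸ div_pos hm hbarF0
  have hkink : F (K - (K - tildeK)) = J.inf' hJ D := by
    rw [sub_sub_cancel, hF _ htildeK0.le, htildeK, div_mul_cancel₀ _ hbarF0.ne', min_self]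
  have hmax : ∀ u ∈ Set.Icc (0:ℝ) 1, u ≠ K - tildeK →
      u * Dg + F (K - u) < (K - tildeK) * Dg + F (K - (K - tildeK)) := by
    intro u hu hne
    rw [hkink, hF _ (by linarith [hu.2])]
    rw [htildeK] at hne ⊢
    exact mul_add_min_lt_of_ne_kink hDg hlt hne
  refine ⟨⟨by linarith, by linarith⟩, hmax, max_lt ?_ ?_⟩
  · exact hmax 0 ⟨le_rfl, zero_le_one⟩ (by linarith)
  · exact hmax 1 ⟨zero_le_one, le_rfl⟩ (by linarith)
end
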